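/- Let a ≥ 1 and b ≥ 1 be integers and define s_n(a,b) = a + b·(s^{(2)}_n − 1) for n ≥ 1. Then every integer of the form 3a + 2bn with n ≥ 0 has exactly one representation 3a + 2bn = s_k(a,b) + 2·s_l(a,b) with integers k, l ≥ 1. -/

import Mathlib

/-- Moser function `m_r(n)`: reinterpret the base-`r` digits of `n` as base-`r²` digits,
i.e. `m_r(n) = Σ_i ν_i r^(2i)` where `n = Σ_i ν_i r^i` is the base-`r` expansion. -/
def moser (r n : ℕ) : ℕ := Nat.ofDigits (r ^ 2) (Nat.digits r n)

/-- `s^(r)_n = r · m_r(n−1) + 1` for `n ≥ 1`. -/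
def moserS (r n : ℕ) : ℕ := r * moser r (n - 1) + 1

/-- The `i`-th base-`r` digit of `n` (0 if beyond the expansion). -/
def dig (r n i : ℕ) : ℕ := (Nat.digits r n).getD i 0

/-- Josephus–Groër survivor function: with `M = N` if `N` is odd, `M = N − 1` otherwise,
and `M = Σ_j b_j 2^j` the binary expansion, `W(N) = 1 + Σ_{j odd} b_j 2^j`. -/
def W (N : ℕ) : ℕ :=
  let M := if N % 2 = 1 then N else N - 1
  1 + ((((Nat.digits 2 M).zipIdx.map Prod.swap).filter (fun p => p.1 % 2 = 1)).map (fun p => p.2 * 2 ^ p.1)).sum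

/-! Since `m_2` reads the binary digits of `x` as base-4 digits, `m_2(x) + 2·m_2(y)` is the number
whose `i`-th base-4 digit is `x_i + 2·y_i`; every `n` therefore splits uniquely as
`m_2(x) + 2·m_2(y)` (the Moser–de Bruijn representation). As `s_k(a,b) = a + 2b·m_2(k − 1)`,
the equation `3a + 2bn = s_k(a,b) + 2·s_l(a,b)` is equivalent to
`n = m_2(k − 1) + 2·m_2(l − 1)`. -/

section Moser

variable {r : ℕ}

theorem moser_zero : moser r 0 = 0 := by
  simp [moser]

theorem digits_sq_moser (hr : 1 < r) (n : ℕ) :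
    Nat.digits (r ^ 2) (moser r n) = Nat.digits r n :=
  Nat.digits_ofDigits _ (by nlinarith) _
    (fun _ hd => (Nat.digits_lt_base hr hd).trans_le (Nat.le_self_pow two_ne_zero r))
    (fun h => Nat.getLast_digit_ne_zero r (Nat.digits_ne_nil_iff_ne_zero.mp h))

theorem moser_injective (hr : 1 < r) : Function.Injective (moser r) := fun m n h =>
  Nat.digits_inj_iff.mp (by rw [← digits_sq_moser hr, h, digits_sq_moser hr])

theorem moser_eq_zero_iff (hr : 1 < r) {n : ℕ} : moser r n = 0 ↔ n = 0 :=
  (moser_injective hr).eq_iff' moser_zero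

theorem moser_add_mul (hr : 1 < r) {d : ℕ} (hd : d < r) (n : ℕ) :
    moser r (d + r * n) = d + r ^ 2 * moser r n := by
  by_cases h : d = 0 ∧ n = 0
  · simp [h.1, h.2, moser_zero]
  · rw [moser, Nat.digits_add r hr d n hd (not_and_or.mp h), Nat.ofDigits_cons, moser]

theorem moserS_sub_one (r n : ℕ) : moserS r n - 1 = r * moser r (n - 1) :=
  Nat.add_sub_cancel _ _

end Moser

theorem moser_two_add_two_mul (x y : ℕ) :
    moser 2 x + 2 * moser 2 y =
      (x % 2 + 2 * (y % 2)) + 4 * (moser 2 (x / 2) + 2 * moser 2 (y / 2)) := by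
  have hx := moser_add_mul one_lt_two (Nat.mod_lt x two_pos) (x / 2)
  have hy := moser_add_mul one_lt_two (Nat.mod_lt y two_pos) (y / 2)
  rw [Nat.mod_add_div] at hx hy
  rw [hx, hy]
  ring

theorem existsUnique_moser_add_two_mul_moser (n : ℕ) :
    ∃! p : ℕ × ℕ, moser 2 p.1 + 2 * moser 2 p.2 = n := by
  induction n using Nat.strong_induction_on with
  | _ n ih =>
  rcases Nat.eq_zero_or_pos n with rfl | hn
  · refine ⟨(0, 0), by simp [moser_zero], fun p hp => ?_⟩
    have h₁ : moser 2 p.1 = 0 := by omega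
    have h₂ : moser 2 p.2 = 0 := by omega
    rw [moser_eq_zero_iff one_lt_two] at h₁ h₂
    exact Prod.ext h₁ h₂
  obtain ⟨⟨u, v⟩, huv, huniq⟩ := ih (n / 4) (by omega)
  refine ⟨(n % 2 + 2 * u, n / 2 % 2 + 2 * v), ?_, ?_⟩
  · simp only [moser_add_mul one_lt_two (Nat.mod_lt _ two_pos)] at huv ⊢
    omega
  · rintro ⟨x, y⟩ h
    dsimp only at h huv
    rw [moser_two_add_two_mul] at h
    obtain ⟨hx, hy⟩ := Prod.ext_iff.mp (huniq (x / 2, y / 2) (by dsimp only; omega))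
    ext <;> dsimp only at hx hy ⊢ <;> omega

theorem arithmetic_progression_unique_representation_general (a b : ℕ) (hb : 1 ≤ b)
    (n : ℕ) :
    ∃! kl : ℕ × ℕ, 1 ≤ kl.1 ∧ 1 ≤ kl.2 ∧
      3 * a + 2 * b * n =
        (a + b * (moserS 2 kl.1 - 1)) + 2 * (a + b * (moserS 2 kl.2 - 1)) := by
  have hsum : ∀ k l, (a + b * (moserS 2 k - 1)) + 2 * (a + b * (moserS 2 l - 1)) =
      3 * a + 2 * b * (moser 2 (k - 1) + 2 * moser 2 (l - 1)) := by
    intro k l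
    rw [moserS_sub_one, moserS_sub_one]
    ring
  have hcancel : ∀ N, 3 * a + 2 * b * n = 3 * a + 2 * b * N ↔ N = n := fun N => by
    rw [Nat.add_left_cancel_iff, Nat.mul_left_cancel_iff (by omega), eq_comm]
  simp only [hsum, hcancel]
  obtain ⟨⟨x, y⟩, hxy, huniq⟩ := existsUnique_moser_add_two_mul_moser n
  refine ⟨(x + 1, y + 1), ⟨le_add_self, le_add_self, hxy⟩, ?_⟩
  rintro ⟨k, l⟩ ⟨hk, hl, h⟩
  obtain ⟨hx, hy⟩ := Prod.ext_iff.mp (huniq (k - 1, l - 1) h)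
  ext <;> dsimp only at hk hl hx hy ⊢ <;> omega

/-- For `a, b ≥ 1`, with `s_n(a,b) = a + b·(s^(2)_n − 1)`, every number `3a + 2bn`
(`n ≥ 0`) has exactly one representation `3a + 2bn = s_k(a,b) + 2·s_l(a,b)`, `k, l ≥ 1`. -/
theorem arithmetic_progression_unique_representation (a b : ℕ) (ha : 1 ≤ a) (hb : 1 ≤ b)
    (n : ℕ) :
    ∃! kl : ℕ × ℕ, 1 ≤ kl.1 ∧ 1 ≤ kl.2 ∧
      3 * a + 2 * b * n =
        (a + b * (moserS 2 kl.1 - 1)) + 2 * (a + b * (moserS 2 kl.2 - 1)) :=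
  arithmetic_progression_unique_representation_general a b hb n
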